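/- For γ > 0 and any corner point s ∈ {0,1}^J, the ridge-regularized COMBSS estimator β̃^Ridge_s = [X_s^T X_s + n(I − T_s²) + γ T_s²]^{-1} X_s^T y satisfies X_s β̃^Ridge_s = X_{[s]} [X_{[s]}^T X_{[s]} + γ I]^{-1} X_{[s]}^T y, i.e. its fitted values agree with those of the ordinary ridge estimator on the selected groups. -/

import Mathlib

open Matrix

/-- Group-structured diagonal matrix `T_s` repeating each `s j` over group `j`. -/
noncomputable def Tmat {p J : ℕ} (g : Fin p → Fin J) (s : Fin J → ℝ) :
    Matrix (Fin p) (Fin p) ℝ :=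
  Matrix.diagonal fun i => s (g i)

/-- `X_{[s]}`: the submatrix of `X` formed by the columns of groups with `s j = 1`. -/
noncomputable def Xsub {n p J : ℕ} (X : Matrix (Fin n) (Fin p) ℝ)
    (g : Fin p → Fin J) (s : Fin J → ℝ) :
    Matrix (Fin n) {i : Fin p // s (g i) = 1} ℝ :=
  fun a i => X a i.1

/-! The selection matrix `P` of the chosen columns satisfies `Pᵀ P = 1` and, at a corner,
`T_s = P Pᵀ`. The COMBSS matrix `M` then acts on `range P` as the ridge matrix
`A = (X P)ᵀ (X P) + γ I` (`M P = P A`) and on the complementary range of `1 - P Pᵀ` as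
multiplication by `n`. Hence `M⁻¹ = P A⁻¹ Pᵀ + n⁻¹ (1 - P Pᵀ)`, so `Pᵀ M⁻¹ P = A⁻¹`, and the
fitted values `X P (Pᵀ M⁻¹ P) Pᵀ Xᵀ y` are those of ridge regression on `X P = X_{[s]}`. -/

namespace Matrix

variable {m k R : Type*} [Fintype m] [Fintype k] [DecidableEq k]

theorem isIdempotentElem_mul_transpose [Semiring R] {P : Matrix m k R} (hP : Pᵀ * P = 1) :
    IsIdempotentElem (P * Pᵀ) := by
  rw [IsIdempotentElem, Matrix.mul_assoc, ← Matrix.mul_assoc Pᵀ, hP, Matrix.one_mul]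

variable [DecidableEq m] [Field R]

theorem inv_eq_of_mul_eq_mul_of_mul_sub_eq_smul {M : Matrix m m R} {P : Matrix m k R}
    {Q : Matrix k m R} {A : Matrix k k R} {c : R} (hA : IsUnit A.det) (hc : c ≠ 0)
    (hMP : M * P = P * A) (hMQ : M * (1 - P * Q) = c • (1 - P * Q)) :
    M⁻¹ = P * A⁻¹ * Q + c⁻¹ • (1 - P * Q) := by
  refine inv_eq_right_inv ?_
  rw [Matrix.mul_add, Matrix.mul_smul, hMQ, smul_smul, inv_mul_cancel₀ hc, one_smul,
    ← Matrix.mul_assoc, ← Matrix.mul_assoc, hMP, Matrix.mul_assoc P, mul_nonsing_inv _ hA,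
    Matrix.mul_one, add_sub_cancel]

theorem transpose_mul_inv_mul_eq_inv {M : Matrix m m R} {P : Matrix m k R} {A : Matrix k k R}
    {c : R} (hP : Pᵀ * P = 1) (hA : IsUnit A.det) (hc : c ≠ 0)
    (hMP : M * P = P * A) (hMQ : M * (1 - P * Pᵀ) = c • (1 - P * Pᵀ)) :
    Pᵀ * M⁻¹ * P = A⁻¹ := by
  have hPQP : Pᵀ * (1 - P * Pᵀ) * P = 0 := by
    simp only [Matrix.mul_sub, Matrix.mul_one, ← Matrix.mul_assoc, hP, Matrix.one_mul, sub_self,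
      Matrix.zero_mul]
  rw [inv_eq_of_mul_eq_mul_of_mul_sub_eq_smul hA hc hMP hMQ, Matrix.mul_add, Matrix.add_mul,
    Matrix.mul_smul, Matrix.smul_mul, hPQP, smul_zero, add_zero, ← Matrix.mul_assoc,
    ← Matrix.mul_assoc, hP, Matrix.one_mul, Matrix.mul_assoc, hP, Matrix.mul_one]

end Matrix

section Ridge

variable {n m k R : Type*} [Fintype n] [Fintype m] [Fintype k] [DecidableEq m] [DecidableEq k]

def combssRidgeGram [Ring R] (B : Matrix n m R) (T : Matrix m m R) (c γ : R) : Matrix m m R :=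
  (B * T)ᵀ * (B * T) + c • (1 - T * T) + γ • (T * T)

def ridgeGram [Ring R] (B : Matrix n k R) (γ : R) : Matrix k k R :=
  Bᵀ * B + γ • 1

variable {P : Matrix m k R}

theorem combssRidgeGram_mul [CommRing R] (hP : Pᵀ * P = 1) (B : Matrix n m R) (c γ : R) :
    combssRidgeGram B (P * Pᵀ) c γ * P = P * ridgeGram (B * P) γ := by
  have hTP : P * Pᵀ * P = P := by rw [Matrix.mul_assoc, hP, Matrix.mul_one]
  simp only [combssRidgeGram, ridgeGram, (isIdempotentElem_mul_transpose hP).eq, Matrix.add_mul,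
    Matrix.sub_mul, Matrix.smul_mul, Matrix.one_mul, hTP, sub_self, smul_zero, add_zero,
    Matrix.mul_add, Matrix.mul_smul, Matrix.mul_one, transpose_mul, transpose_transpose,
    Matrix.mul_assoc]

theorem combssRidgeGram_mul_one_sub [Ring R] (hP : Pᵀ * P = 1) (B : Matrix n m R) (c γ : R) :
    combssRidgeGram B (P * Pᵀ) c γ * (1 - P * Pᵀ) = c • (1 - P * Pᵀ) := by
  have hT : P * Pᵀ * (1 - P * Pᵀ) = 0 := by
    rw [Matrix.mul_sub, Matrix.mul_one, (isIdempotentElem_mul_transpose hP).eq, sub_self]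
  have hQ : (1 - P * Pᵀ) * (1 - P * Pᵀ) = 1 - P * Pᵀ := by
    rw [Matrix.sub_mul, Matrix.one_mul, hT, sub_zero]
  simp only [combssRidgeGram, (isIdempotentElem_mul_transpose hP).eq, Matrix.add_mul,
    Matrix.smul_mul, Matrix.mul_assoc, hT, hQ, Matrix.mul_zero, smul_zero, add_zero, zero_add]

theorem combssRidge_fittedValues_eq [Field R] (hP : Pᵀ * P = 1) (B : Matrix n m R) {c γ : R}
    (hc : c ≠ 0) (hA : IsUnit (ridgeGram (B * P) γ).det) (y : n → R) :
    (B * (P * Pᵀ)) *ᵥ ((combssRidgeGram B (P * Pᵀ) c γ)⁻¹ *ᵥ ((B * (P * Pᵀ))ᵀ *ᵥ y)) =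
      (B * P) *ᵥ ((ridgeGram (B * P) γ)⁻¹ *ᵥ ((B * P)ᵀ *ᵥ y)) := by
  have hcompress := transpose_mul_inv_mul_eq_inv hP hA hc (combssRidgeGram_mul hP B c γ)
    (combssRidgeGram_mul_one_sub hP B c γ)
  simp only [mulVec_mulVec, transpose_mul, transpose_transpose]
  rw [← hcompress]
  simp only [Matrix.mul_assoc]

end Ridge

theorem posDef_ridgeGram {n k : Type*} [Fintype n] [Fintype k] [DecidableEq k]
    (B : Matrix n k ℝ) {γ : ℝ} (hγ : 0 < γ) : (ridgeGram B γ).PosDef := by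
  simpa [ridgeGram] using
    PosDef.posSemidef_add (posSemidef_conjTranspose_mul_self B) (PosDef.one.smul hγ)

section Selection

variable {m : Type*} [DecidableEq m] (R : Type*) [NonAssocSemiring R] (q : m → Prop)

def selectionMatrix : Matrix m (Subtype q) R :=
  (1 : Matrix m m R).submatrix id Subtype.val

variable [Fintype m]

theorem transpose_selectionMatrix_mul_self :
    (selectionMatrix R q)ᵀ * selectionMatrix R q = 1 := by
  ext i j
  simp [selectionMatrix, mul_apply, one_apply, Subtype.ext_iff]

theorem selectionMatrix_mul_transpose [DecidablePred q] :
    selectionMatrix R q * (selectionMatrix R q)ᵀ = diagonal fun i => if q i then 1 else 0 := by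
  ext i j
  calc (selectionMatrix R q * (selectionMatrix R q)ᵀ) i j
      = ∑ x ∈ {x | q x}, (1 : Matrix m m R) i x * (1 : Matrix m m R) j x :=
        (Finset.sum_subtype _ (fun _ => Finset.mem_filter_univ _)
          fun x => (1 : Matrix m m R) i x * (1 : Matrix m m R) j x).symm
    _ = _ := by
      simp only [one_apply, mul_ite, mul_one, mul_zero, Finset.sum_ite_eq, diagonal_apply]
      split_ifs <;> simp_all

theorem mul_selectionMatrix {n : Type*} (B : Matrix n m R) :
    B * selectionMatrix R q = B.submatrix id Subtype.val :=
  mul_submatrix_one (Equiv.refl m) Subtype.val B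

end Selection

/-- For `γ > 0` and any corner point `s ∈ {0,1}^J`, the ridge-regularized COMBSS estimator
`β̃^Ridge_s = [X_sᵀ X_s + n(I − T_s²) + γ T_s²]⁻¹ X_sᵀ y` has fitted values agreeing with
those of the ordinary ridge estimator on the selected groups:
`X_s β̃^Ridge_s = X_{[s]} [X_{[s]}ᵀ X_{[s]} + γ I]⁻¹ X_{[s]}ᵀ y`. -/
theorem ridge_fitted_values_agree_at_corner (n p J : ℕ) (hn : 0 < n)
    (γ : ℝ) (hγ : 0 < γ)
    (X : Matrix (Fin n) (Fin p) ℝ) (g : Fin p → Fin J) (y : Fin n → ℝ)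
    (s : Fin J → ℝ) (hs : ∀ j, s j = 0 ∨ s j = 1) :
    (X * Tmat g s).mulVec
        ((((X * Tmat g s)ᵀ * (X * Tmat g s) +
            (n : ℝ) • ((1 : Matrix (Fin p) (Fin p) ℝ) - Tmat g s * Tmat g s) +
            γ • (Tmat g s * Tmat g s))⁻¹).mulVec ((X * Tmat g s)ᵀ.mulVec y)) =
      (Xsub X g s).mulVec
        ((((Xsub X g s)ᵀ * Xsub X g s +
            γ • (1 : Matrix {i : Fin p // s (g i) = 1} {i : Fin p // s (g i) = 1} ℝ))⁻¹).mulVec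
          ((Xsub X g s)ᵀ.mulVec y)) := by
  set P : Matrix (Fin p) {i : Fin p // s (g i) = 1} ℝ := selectionMatrix ℝ _
  have hT : Tmat g s = P * Pᵀ := by
    rw [selectionMatrix_mul_transpose, Tmat]
    congr 1 with i
    rcases hs (g i) with h | h <;> simp [h]
  have hX : Xsub X g s = X * P := (mul_selectionMatrix ℝ _ X).symm
  rw [hT, hX]
  exact combssRidge_fittedValues_eq (transpose_selectionMatrix_mul_self ℝ _) X
    (Nat.cast_ne_zero.mpr hn.ne') (posDef_ridgeGram _ hγ).det_pos.ne'.isUnit y
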